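/- arXiv:2301.10060 — 5 statements merged into one kernel-verified Lean document; each statement's English description precedes it below -/
import Mathlib

section
/- Let n be a natural number, let J be a real n×n skew-symmetric matrix, R a real n×n positive semidefinite matrix, Q a real n×n symmetric matrix, and set A = (J − R)Q. Let x : ℝ → ℝⁿ satisfy x' (t) = A x(t) at every t ∈ ℝ. Then the function V(t) = (1/2)·x(t)ᵀQ x(t) is antitone (nonincreasing) on ℝ; in particular V(t) ≤ V(s) whenever s ≤ t. -/
/-! Along a solution, `V' = (Q x)ᵀ A x = (Q x)ᵀ (J - R) (Q x)`, using the symmetry of `Q`; the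
`J`-term vanishes by skew-symmetry and the `R`-term is nonpositive. -/

open Matrix

section Calculus

variable {𝕜 : Type*} [NontriviallyNormedField 𝕜] {m ι : Type*} [Fintype ι]
  {f g : 𝕜 → ι → 𝕜} {f' g' : ι → 𝕜} {t : 𝕜}

theorem HasDerivAt.dotProduct (hf : HasDerivAt f f' t) (hg : HasDerivAt g g' t) :
    HasDerivAt (fun s => f s ⬝ᵥ g s) (f' ⬝ᵥ g t + f t ⬝ᵥ g') t := by
  have hsum := HasDerivAt.fun_sum (u := Finset.univ) fun i _ =>
    (hasDerivAt_pi.mp hf i).fun_mul (hasDerivAt_pi.mp hg i)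
  rw [Finset.sum_add_distrib] at hsum
  exact hsum

theorem HasDerivAt.mulVec (M : Matrix m ι 𝕜) (hf : HasDerivAt f f' t) :
    HasDerivAt (fun s => M *ᵥ f s) (M *ᵥ f') t :=
  hasDerivAt_pi.mpr fun i => by
    have hrow := (hasDerivAt_const t fun j => M i j).dotProduct hf
    rw [zero_dotProduct, zero_add] at hrow
    exact hrow

theorem HasDerivAt.dotProduct_mulVec_self {Q : Matrix ι ι 𝕜} (hQ : Qᵀ = Q)
    (hf : HasDerivAt f f' t) :
    HasDerivAt (fun s => f s ⬝ᵥ (Q *ᵥ f s)) (2 * ((Q *ᵥ f t) ⬝ᵥ f')) t := by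
  convert hf.dotProduct (hf.mulVec Q) using 1
  rw [dotProduct_mulVec (f t), ← mulVec_transpose, hQ, dotProduct_comm f', two_mul]

end Calculus

namespace Matrix

variable {R ι : Type*} [Fintype ι] [CommRing R] {J : Matrix ι ι R}

theorem dotProduct_mulVec_self_eq_zero [NoZeroDivisors R] [CharZero R] (hJ : Jᵀ = -J)
    (w : ι → R) : w ⬝ᵥ (J *ᵥ w) = 0 := by
  refine self_eq_neg.mp ?_
  calc w ⬝ᵥ (J *ᵥ w) = (Jᵀ *ᵥ w) ⬝ᵥ w := by rw [dotProduct_mulVec, mulVec_transpose]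
    _ = -(w ⬝ᵥ (J *ᵥ w)) := by rw [hJ, neg_mulVec, neg_dotProduct, dotProduct_comm]

theorem dotProduct_sub_mulVec_self_nonpos [LinearOrder R] [IsStrictOrderedRing R]
    {D : Matrix ι ι R} (hJ : Jᵀ = -J) (hD : ∀ v : ι → R, 0 ≤ v ⬝ᵥ (D *ᵥ v)) (w : ι → R) :
    w ⬝ᵥ ((J - D) *ᵥ w) ≤ 0 := by
  rw [sub_mulVec, dotProduct_sub, dotProduct_mulVec_self_eq_zero hJ, zero_sub, neg_nonpos]
  exact hD w

end Matrix

theorem lyapunov_antitone_general (n : ℕ) (J R Q A : Matrix (Fin n) (Fin n) ℝ)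
    (hJ : Jᵀ = -J) (hRpsd : ∀ v : Fin n → ℝ, 0 ≤ v ⬝ᵥ (R *ᵥ v))
    (hQsym : Qᵀ = Q) (hA : A = (J - R) * Q)
    (x : ℝ → (Fin n → ℝ))
    (hx : ∀ t : ℝ, HasDerivAt x (A *ᵥ x t) t) :
    Antitone (fun t => (1 / 2 : ℝ) * (x t ⬝ᵥ (Q *ᵥ x t))) := by
  have hV (t : ℝ) := ((hx t).dotProduct_mulVec_self hQsym).const_mul (1 / 2 : ℝ)
  refine antitone_of_hasDerivAt_nonpos hV fun t => ?_
  rw [Pi.zero_apply]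
  have hdissip := dotProduct_sub_mulVec_self_nonpos hJ hRpsd (Q *ᵥ x t)
  rw [mulVec_mulVec, ← hA] at hdissip
  linarith

/-- For `A = (J - R) Q` with `J` skew-symmetric, `R` positive semidefinite and
`Q` symmetric, along any global solution of `x' = A x` the Lyapunov function
`V(t) = (1/2) x(t)ᵀ Q x(t)` is nonincreasing. -/
theorem lyapunov_antitone (n : ℕ) (J R Q A : Matrix (Fin n) (Fin n) ℝ)
    (hJ : Jᵀ = -J) (hRsym : Rᵀ = R) (hRpsd : ∀ v : Fin n → ℝ, 0 ≤ v ⬝ᵥ (R *ᵥ v))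
    (hQsym : Qᵀ = Q) (hA : A = (J - R) * Q)
    (x : ℝ → (Fin n → ℝ))
    (hx : ∀ t : ℝ, HasDerivAt x (A *ᵥ x t) t) :
    Antitone (fun t => (1 / 2 : ℝ) * (x t ⬝ᵥ (Q *ᵥ x t))) :=
  lyapunov_antitone_general n J R Q A hJ hRpsd hQsym hA x hx
end

section
/- Let n be a natural number, let J be a real n×n skew-symmetric matrix, R a real n×n positive semidefinite matrix, and Q a real n×n positive definite matrix. Then every eigenvalue μ of the matrix A = (J − R)Q (i.e., every μ in the spectrum over ℂ of the complexification of A) satisfies Re(μ) ≤ 0. -/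
/-!
If `(J - R) Q v = μ v` with `v ≠ 0`, put `x = Q v`. Since `Q` is symmetric,
`x* (J - R) x = μ v* Q v` with `v* Q v > 0`. The real part of the left side is `-Re (x* R x) ≤ 0`,
because a real skew-symmetric `J` makes `x* J x` purely imaginary; hence `Re μ ≤ 0`.
-/

open Matrix
open scoped ComplexOrder

namespace Matrix

variable {n : Type*} [Fintype n]

theorem dotProduct_mulVec_self_eq_zero_of_transpose_eq_neg {R : Type*} [CommRing R]
    [IsAddTorsionFree R] {J : Matrix n n R} (hJ : Jᵀ = -J) (v : n → R) :
    v ⬝ᵥ J *ᵥ v = 0 := by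
  refine self_eq_neg.1 ?_
  calc v ⬝ᵥ J *ᵥ v = Jᵀ *ᵥ v ⬝ᵥ v := by
        rw [dotProduct_mulVec, ← vecMul_transpose, transpose_transpose]
    _ = -(v ⬝ᵥ J *ᵥ v) := by rw [dotProduct_comm, hJ, neg_mulVec, dotProduct_neg]

theorem re_star_dotProduct_map_ofReal_mulVec (M : Matrix n n ℝ) (x : n → ℂ) :
    (star x ⬝ᵥ M.map (↑) *ᵥ x).re =
      (fun i ↦ (x i).re) ⬝ᵥ M *ᵥ (fun i ↦ (x i).re) +
        (fun i ↦ (x i).im) ⬝ᵥ M *ᵥ (fun i ↦ (x i).im) := by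
  simp only [dotProduct, mulVec, Complex.re_sum, ← Finset.sum_add_distrib, Finset.mul_sum]
  refine Finset.sum_congr rfl fun i _ ↦ Finset.sum_congr rfl fun j _ ↦ ?_
  simp only [Pi.star_apply, map_apply, Complex.star_def, Complex.mul_re, Complex.conj_re,
    Complex.conj_im, Complex.ofReal_re, Complex.ofReal_im, Complex.mul_im]
  ring

theorem PosDef.map_ofReal {Q : Matrix n n ℝ} (hQ : Q.PosDef) :
    (Q.map ((↑) : ℝ → ℂ)).PosDef := by
  have hQc : (Q.map ((↑) : ℝ → ℂ)).IsHermitian :=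
    hQ.isHermitian.map _ fun _ ↦ by simp
  refine .of_dotProduct_mulVec_pos hQc fun x hx ↦ Complex.pos_iff.2 ⟨?_, ?_⟩
  · have hpos (a : n → ℝ) (ha : a ≠ 0) : 0 < a ⬝ᵥ Q *ᵥ a := by
      simpa using hQ.dotProduct_mulVec_pos ha
    have hnonneg (a : n → ℝ) : 0 ≤ a ⬝ᵥ Q *ᵥ a := by
      simpa using hQ.posSemidef.dotProduct_mulVec_nonneg a
    have hx' : (fun i ↦ (x i).re) ≠ 0 ∨ (fun i ↦ (x i).im) ≠ 0 := by
      by_contra! h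
      exact hx (funext fun i ↦ Complex.ext (congrFun h.1 i) (congrFun h.2 i))
    rw [re_star_dotProduct_map_ofReal_mulVec]
    rcases hx' with h | h
    · linarith [hpos _ h, hnonneg fun i ↦ (x i).im]
    · linarith [hpos _ h, hnonneg fun i ↦ (x i).re]
  · exact (hQc.im_star_dotProduct_mulVec_self x).symm

theorem re_le_zero_of_mem_spectrum_mul_posDef [DecidableEq n] {M P : Matrix n n ℂ}
    (hM : ∀ x, (star x ⬝ᵥ M *ᵥ x).re ≤ 0) (hP : P.PosDef) {μ : ℂ}
    (hμ : μ ∈ spectrum ℂ (M * P)) : μ.re ≤ 0 := by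
  rw [← spectrum_toLin', ← Module.End.hasEigenvalue_iff_mem_spectrum] at hμ
  obtain ⟨v, hv, hv0⟩ := hμ.exists_hasEigenvector
  rw [Module.End.mem_eigenspace_iff, toLin'_apply] at hv
  obtain ⟨hc_re, hc_im⟩ := Complex.pos_iff.1 (hP.dotProduct_mulVec_pos hv0)
  have hquad : star (P *ᵥ v) ⬝ᵥ M *ᵥ (P *ᵥ v) = μ * (star v ⬝ᵥ P *ᵥ v) := by
    rw [mulVec_mulVec, hv, star_mulVec, hP.isHermitian.eq, dotProduct_smul, ← dotProduct_mulVec,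
      smul_eq_mul]
  have hdissip := hM (P *ᵥ v)
  rw [hquad, Complex.mul_re, ← hc_im, mul_zero, sub_zero] at hdissip
  exact nonpos_of_mul_nonpos_left hdissip hc_re

end Matrix

theorem eigenvalues_re_nonpos_general (n : ℕ) (J R Q A : Matrix (Fin n) (Fin n) ℝ)
    (hJ : Jᵀ = -J)
    (hRpsd : ∀ v : Fin n → ℝ, 0 ≤ v ⬝ᵥ (R *ᵥ v))
    (hQsym : Qᵀ = Q) (hQpd : ∀ v : Fin n → ℝ, v ≠ 0 → 0 < v ⬝ᵥ (Q *ᵥ v))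
    (hA : A = (J - R) * Q) :
    ∀ μ ∈ spectrum ℂ (A.map ((↑) : ℝ → ℂ)), μ.re ≤ 0 := by
  intro μ hμ
  have hQ : Q.PosDef := posDef_iff_dotProduct_mulVec.2 ⟨hQsym, by simpa using hQpd⟩
  have hAc : A.map ((↑) : ℝ → ℂ) = (J - R).map (↑) * Q.map (↑) := by
    rw [hA]; exact Matrix.map_mul (f := Complex.ofRealHom)
  rw [hAc, Matrix.map_sub _ fun _ _ ↦ Complex.ofReal_sub _ _] at hμ
  refine re_le_zero_of_mem_spectrum_mul_posDef (fun x ↦ ?_) hQ.map_ofReal hμ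
  rw [sub_mulVec, dotProduct_sub, Complex.sub_re, re_star_dotProduct_map_ofReal_mulVec,
    re_star_dotProduct_map_ofReal_mulVec, dotProduct_mulVec_self_eq_zero_of_transpose_eq_neg hJ,
    dotProduct_mulVec_self_eq_zero_of_transpose_eq_neg hJ]
  linarith [hRpsd fun i ↦ (x i).re, hRpsd fun i ↦ (x i).im]

/-- For `A = (J - R) Q` with `J` skew-symmetric, `R` positive semidefinite and `Q`
positive definite, every eigenvalue of (the complexification of) `A` has
nonpositive real part. -/
theorem eigenvalues_re_nonpos (n : ℕ) (J R Q A : Matrix (Fin n) (Fin n) ℝ)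
    (hJ : Jᵀ = -J)
    (hRsym : Rᵀ = R) (hRpsd : ∀ v : Fin n → ℝ, 0 ≤ v ⬝ᵥ (R *ᵥ v))
    (hQsym : Qᵀ = Q) (hQpd : ∀ v : Fin n → ℝ, v ≠ 0 → 0 < v ⬝ᵥ (Q *ᵥ v))
    (hA : A = (J - R) * Q) :
    ∀ μ ∈ spectrum ℂ (A.map ((↑) : ℝ → ℂ)), μ.re ≤ 0 :=
  eigenvalues_re_nonpos_general n J R Q A hJ hRpsd hQsym hQpd hA
end

section
/- Let n be a natural number and let A be a real n×n matrix all of whose eigenvalues have strictly negative real part (A is Hurwitz). Then there exist real n×n matrices J, R, Q such that J is skew-symmetric, R is positive definite, Q is positive definite, and A = (J − R)Q. -/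
/-!
By Lyapunov's theorem a Hurwitz matrix `A` admits a positive definite `S` with
`A S + S Aᵀ = -1`. Then `A S = J - ½·1` where `J` is the skew-symmetric part of `A S`, so
`A = (J - ½·1) S⁻¹` with `S⁻¹` positive definite.

For Lyapunov's theorem: the spectra of `A` and `-Aᵀ` are disjoint, so `X ↦ A X + X Aᵀ` is
invertible (Sylvester), and its solution `S` of `A S + S Aᵀ = -1` is symmetric and nonsingular.
Along the Hurwitz path `t A - (1 - t) 1` this solution moves continuously from `½·1`; being
always nonsingular, it cannot leave the positive definite matrices.
-/

open Matrix Polynomial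
open scoped Kronecker

theorem Polynomial.aeval_mul_of_mul_eq_mul {R A : Type*} [CommSemiring R] [Semiring A]
    [Algebra R A] {a b x : A} (h : a * x = x * b) (p : R[X]) :
    aeval a p * x = x * aeval b p := by
  induction p using Polynomial.induction_on' with
  | add p q hp hq => rw [map_add, map_add, add_mul, mul_add, hp, hq]
  | monomial k c =>
    have hk : a ^ k * x = x * b ^ k := (SemiconjBy.pow_right h.symm k).symm
    rw [aeval_monomial, aeval_monomial, mul_assoc, hk, ← mul_assoc, ← mul_assoc,
      Algebra.commutes]

namespace Matrix

variable {n : Type*} [Fintype n]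

theorem posDef_iff_transpose_eq_and_dotProduct_mulVec_pos {M : Matrix n n ℝ} :
    M.PosDef ↔ Mᵀ = M ∧ ∀ v : n → ℝ, v ≠ 0 → 0 < v ⬝ᵥ (M *ᵥ v) := by
  simp only [posDef_iff_dotProduct_mulVec, IsHermitian, conjTranspose_eq_transpose_of_trivial,
    star_trivial]

theorem posDef_iff_forall_mem_sphere {M : Matrix n n ℝ} (hM : M.IsHermitian) :
    M.PosDef ↔ ∀ v ∈ Metric.sphere (0 : n → ℝ) 1, 0 < v ⬝ᵥ (M *ᵥ v) := by
  simp only [posDef_iff_dotProduct_mulVec, hM, star_trivial, true_and]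
  refine ⟨fun h v hv => h (ne_zero_of_mem_unit_sphere ⟨v, hv⟩), fun h v hv => ?_⟩
  have hnorm : 0 < ‖v‖ := norm_pos_iff.2 hv
  have hunit := h (‖v‖⁻¹ • v) (by simp [norm_smul, hnorm.ne'])
  rw [mulVec_smul, dotProduct_smul, smul_dotProduct, smul_eq_mul, smul_eq_mul] at hunit
  exact pos_of_mul_pos_right (pos_of_mul_pos_right hunit (by positivity)) (by positivity)

variable [DecidableEq n]

theorem posDef_of_continuous_of_isUnit {X : Type*} [TopologicalSpace X] [PreconnectedSpace X]
    {P : X → Matrix n n ℝ} (hP : Continuous P) (hsymm : ∀ x, (P x).IsHermitian)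
    (hunit : ∀ x, IsUnit (P x)) {x₀ : X} (h₀ : (P x₀).PosDef) (x : X) : (P x).PosDef := by
  have hq : Continuous fun p : X × (n → ℝ) => p.2 ⬝ᵥ (P p.1 *ᵥ p.2) :=
    continuous_snd.dotProduct ((hP.comp continuous_fst).matrix_mulVec continuous_snd)
  have hpsd (x : X) : (P x).PosDef ↔ ∀ v, 0 ≤ v ⬝ᵥ (P x *ᵥ v) := by
    have h := (posSemidef_iff_dotProduct_mulVec (M := P x)).trans (and_iff_right (hsymm x))
    simp only [star_trivial] at h
    exact ⟨fun hx => h.1 hx.posSemidef, fun hx => ((h.2 hx).posDef_iff_isUnit).2 (hunit x)⟩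
  have hclosed : IsClosed {x | (P x).PosDef} := by
    simp only [hpsd, Set.ofPred_forall]
    exact isClosed_iInter fun v => isClosed_le continuous_const (hq.comp (.prodMk_left v))
  have hopen : IsOpen {x | (P x).PosDef} := by
    -- the complement is the projection of a closed set along the compact unit sphere
    have hcompl : {x | (P x).PosDef}ᶜ = Prod.fst ''
        {p : X × Metric.sphere (0 : n → ℝ) 1 | p.2.1 ⬝ᵥ (P p.1 *ᵥ p.2.1) ≤ 0} := by
      ext x
      simp [posDef_iff_forall_mem_sphere (hsymm x)]
    rw [← isClosed_compl_iff, hcompl]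
    exact isClosedMap_fst_of_compactSpace _ (isClosed_le
      (hq.comp (continuous_fst.prodMk (continuous_subtype_val.comp continuous_snd)))
      continuous_const)
  exact Set.eq_univ_iff_forall.1 (IsClopen.eq_univ ⟨hclosed, hopen⟩ ⟨x₀, h₀⟩) x

theorem spectrum_transpose {K : Type*} [Field K] (A : Matrix n n K) :
    spectrum K Aᵀ = spectrum K A := by
  ext μ
  simp only [mem_spectrum_iff_isRoot_charpoly, charpoly_transpose]

theorem eq_zero_of_mul_eq_mul_of_disjoint_spectrum {K : Type*} [Field K] [IsAlgClosed K]
    {A B X : Matrix n n K} (hAB : Disjoint (spectrum K A) (spectrum K B)) (h : A * X = X * B) :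
    X = 0 := by
  cases isEmpty_or_nonempty n
  · exact Subsingleton.elim _ _
  have hunit : IsUnit (aeval A B.charpoly) := by
    rw [← spectrum.zero_notMem_iff K, spectrum.map_polynomial_aeval_of_nonempty _ _
      (spectrum.nonempty_of_isAlgClosed_of_finiteDimensional K A)]
    rintro ⟨μ, hμA, hμ⟩
    exact hAB.notMem_of_mem_left hμA (mem_spectrum_iff_isRoot_charpoly.2 hμ)
  have hzero : aeval A B.charpoly * X = 0 := by
    rw [aeval_mul_of_mul_eq_mul h, aeval_self_charpoly, mul_zero]
  exact hunit.mul_right_eq_zero.1 hzero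

def IsHurwitz (A : Matrix n n ℝ) : Prop :=
  ∀ μ ∈ spectrum ℂ (A.map ((↑) : ℝ → ℂ)), μ.re < 0

theorem IsHurwitz.eq_zero_of_mul_add_mul_transpose_eq_zero {A X : Matrix n n ℝ}
    (hA : A.IsHurwitz) (h : A * X + X * Aᵀ = 0) : X = 0 := by
  set A' := A.map ((↑) : ℝ → ℂ)
  have hdisj : Disjoint (spectrum ℂ A') (spectrum ℂ (-A'ᵀ)) := by
    refine Set.disjoint_left.2 fun μ hμ hμ' => ?_
    rw [← spectrum.neg_eq, spectrum_transpose, Set.mem_neg] at hμ'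
    have h₁ := hA _ hμ
    have h₂ := hA _ hμ'
    rw [Complex.neg_re] at h₂
    linarith
  have hmap : A' * X.map (↑) = X.map (↑) * -A'ᵀ := by
    have hc := congrArg (Complex.ofRealHom.mapMatrix : Matrix n n ℝ →+* Matrix n n ℂ) h
    rw [map_add, map_mul, map_mul, map_zero, RingHom.mapMatrix_apply, RingHom.mapMatrix_apply,
      RingHom.mapMatrix_apply, transpose_map] at hc
    rw [mul_neg]
    exact eq_neg_of_add_eq_zero_left hc
  exact map_injective Complex.ofReal_injective
    (eq_zero_of_mul_eq_mul_of_disjoint_spectrum hdisj hmap)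

theorem IsHurwitz.smul_sub_smul_one {A : Matrix n n ℝ} (hA : A.IsHurwitz) {t : ℝ}
    (ht₀ : 0 ≤ t) (ht₁ : t ≤ 1) : (t • A - (1 - t) • 1).IsHurwitz := by
  intro μ hμ
  have hmap : (t • A - (1 - t) • 1).map ((↑) : ℝ → ℂ)
      = -algebraMap ℂ _ (1 - t : ℂ) + (t : ℂ) • A.map (↑) := by
    ext i j
    by_cases hij : i = j <;> simp [hij, algebraMap_eq_diagonal, sub_eq_neg_add]
  rw [hmap, ← spectrum.add_mem_iff] at hμ
  rcases ht₀.eq_or_lt with rfl | ht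
  · rw [Complex.ofReal_zero, zero_smul] at hμ
    cases isEmpty_or_nonempty n
    · simp at hμ
    rw [spectrum.zero_eq, Set.mem_singleton_iff] at hμ
    have hμ₁ : μ = -1 := by linear_combination hμ
    simp [hμ₁]
  · have ht' : (t : ℂ) ≠ 0 := by exact_mod_cast ht.ne'
    have hμu : Units.mk0 (t : ℂ) ht' • ((μ + (1 - t)) / t)
        ∈ spectrum ℂ (Units.mk0 (t : ℂ) ht' • A.map ((↑) : ℝ → ℂ)) := by
      simpa [Units.smul_def, mul_div_cancel₀ _ ht'] using hμ
    have hre := hA _ (spectrum.smul_mem_smul_iff.1 hμu)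
    rw [Complex.div_ofReal_re, div_lt_iff₀ ht, zero_mul] at hre
    simp only [Complex.add_re, Complex.sub_re, Complex.one_re, Complex.ofReal_re] at hre
    linarith

section Lyapunov

variable {R : Type*} [CommRing R]

def lyapunovMatrix (A : Matrix n n R) : Matrix (n × n) (n × n) R := 1 ⊗ₖ A + A ⊗ₖ 1

theorem lyapunovMatrix_mulVec_vec (A X : Matrix n n R) :
    lyapunovMatrix A *ᵥ vec X = vec (A * X + X * Aᵀ) := by
  rw [lyapunovMatrix, add_mulVec, ← vec_mul_eq_mulVec, kronecker_mulVec_vec, Matrix.one_mul,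
    vec_add]

noncomputable def lyapunovSolution (A C : Matrix n n R) : Matrix n n R :=
  of fun i j => ((lyapunovMatrix A)⁻¹ *ᵥ vec C) (j, i)

theorem vec_lyapunovSolution (A C : Matrix n n R) :
    vec (lyapunovSolution A C) = (lyapunovMatrix A)⁻¹ *ᵥ vec C := rfl

variable {A : Matrix n n R}

theorem mul_add_mul_transpose_lyapunovSolution (hA : IsUnit (lyapunovMatrix A))
    (C : Matrix n n R) : A * lyapunovSolution A C + lyapunovSolution A C * Aᵀ = C := by
  rw [← vec_inj, ← lyapunovMatrix_mulVec_vec, vec_lyapunovSolution, mulVec_mulVec,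
    mul_nonsing_inv _ ((isUnit_iff_isUnit_det _).1 hA), one_mulVec]

theorem eq_lyapunovSolution (hA : IsUnit (lyapunovMatrix A)) {X C : Matrix n n R}
    (hX : A * X + X * Aᵀ = C) : X = lyapunovSolution A C := by
  rw [← vec_inj, vec_lyapunovSolution, ← hX, ← lyapunovMatrix_mulVec_vec, mulVec_mulVec,
    nonsing_inv_mul _ ((isUnit_iff_isUnit_det _).1 hA), one_mulVec]

theorem transpose_lyapunovSolution (hA : IsUnit (lyapunovMatrix A)) {C : Matrix n n R}
    (hC : Cᵀ = C) : (lyapunovSolution A C)ᵀ = lyapunovSolution A C := by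
  refine eq_lyapunovSolution hA ?_
  conv_rhs => rw [← hC, ← mul_add_mul_transpose_lyapunovSolution hA C]
  rw [transpose_add, transpose_mul, transpose_mul, transpose_transpose, add_comm]

end Lyapunov

theorem isUnit_lyapunovMatrix {K : Type*} [Field K] {A : Matrix n n K}
    (hA : ∀ X, A * X + X * Aᵀ = 0 → X = 0) : IsUnit (lyapunovMatrix A) := by
  rw [← mulVec_injective_iff_isUnit]
  refine (injective_iff_map_eq_zero (lyapunovMatrix A).mulVecLin).2 fun v hv => ?_
  obtain ⟨X, rfl⟩ := vec_bijective.2 v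
  rw [mulVecLin_apply, lyapunovMatrix_mulVec_vec, vec_eq_zero_iff] at hv
  rw [hA X hv, vec_zero]

theorem _root_.Continuous.matrix_lyapunovSolution {X : Type*} [TopologicalSpace X]
    {A : X → Matrix n n ℝ} (hA : Continuous A) (hunit : ∀ x, IsUnit (lyapunovMatrix (A x)))
    (C : Matrix n n ℝ) : Continuous fun x => lyapunovSolution (A x) C := by
  have hK : Continuous fun x => lyapunovMatrix (A x) := by
    refine continuous_matrix fun p q => ?_
    simp only [lyapunovMatrix, add_apply, kroneckerMap_apply]
    fun_prop
  have hinv : Continuous fun x => (lyapunovMatrix (A x))⁻¹ := by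
    refine continuous_iff_continuousAt.2 fun x =>
      (continuousAt_matrix_inv _ ?_).comp hK.continuousAt
    rw [Ring.inverse_eq_inv']
    exact continuousAt_inv₀ ((isUnit_iff_isUnit_det _).1 (hunit x)).ne_zero
  exact continuous_matrix fun i j =>
    (continuous_apply (j, i)).comp (hinv.matrix_mulVec continuous_const)

theorem isUnit_of_mul_add_mul_transpose_eq_neg_one {A S : Matrix n n ℝ} (hS : Sᵀ = S)
    (h : A * S + S * Aᵀ = -1) : IsUnit S := by
  rw [← mulVec_injective_iff_isUnit]
  refine (injective_iff_map_eq_zero S.mulVecLin).2 fun v hv => ?_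
  rw [mulVecLin_apply] at hv
  have hvS : v ᵥ* S = 0 := by rw [← mulVec_transpose, hS, hv]
  have hquad := congrArg (v ⬝ᵥ · *ᵥ v) h
  simp only [add_mulVec, ← mulVec_mulVec, hv, mulVec_zero, dotProduct_add, dotProduct_mulVec v S,
    hvS, zero_dotProduct, dotProduct_zero, add_zero, neg_mulVec, one_mulVec,
    dotProduct_neg] at hquad
  exact dotProduct_self_eq_zero.1 (neg_eq_zero.1 hquad.symm)

theorem IsHurwitz.exists_posDef_mul_add_mul_transpose_eq_neg_one {A : Matrix n n ℝ}
    (hA : A.IsHurwitz) : ∃ S : Matrix n n ℝ, S.PosDef ∧ A * S + S * Aᵀ = -1 := by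
  let M (t : unitInterval) : Matrix n n ℝ := (t : ℝ) • A - (1 - (t : ℝ)) • 1
  have hM (t : unitInterval) : IsUnit (lyapunovMatrix (M t)) := isUnit_lyapunovMatrix fun _ =>
    (hA.smul_sub_smul_one t.2.1 t.2.2).eq_zero_of_mul_add_mul_transpose_eq_zero
  let P (t : unitInterval) := lyapunovSolution (M t) (-1)
  have hPeq (t : unitInterval) := mul_add_mul_transpose_lyapunovSolution (hM t) (-1)
  have hsymm (t : unitInterval) : (P t)ᵀ = P t := transpose_lyapunovSolution (hM t) (by simp)
  have hP₀ : P 0 = (2⁻¹ : ℝ) • 1 := by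
    refine (eq_lyapunovSolution (hM 0) ?_).symm
    simp only [M, Set.Icc.coe_zero, zero_smul, sub_zero, one_smul, zero_sub]
    rw [transpose_neg, transpose_one, neg_one_mul, mul_neg_one, ← neg_add, ← add_smul]
    norm_num
  have hP₁ : (P 1).PosDef := posDef_of_continuous_of_isUnit
    ((by fun_prop : Continuous M).matrix_lyapunovSolution hM _)
    (fun t => (conjTranspose_eq_transpose_of_trivial _).trans (hsymm t))
    (fun t => isUnit_of_mul_add_mul_transpose_eq_neg_one (hsymm t) (hPeq t))
    (hP₀ ▸ PosDef.one.smul (by norm_num)) 1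
  have hM₁ : M 1 = A := by simp [M]
  exact ⟨P 1, hP₁, hM₁ ▸ hPeq 1⟩

end Matrix

/-- Every Hurwitz matrix `A` admits a decomposition `A = (J - R) Q` with `J`
skew-symmetric and `R`, `Q` positive definite. -/
theorem hurwitz_decomposition (n : ℕ) (A : Matrix (Fin n) (Fin n) ℝ)
    (hH : ∀ μ ∈ spectrum ℂ (A.map ((↑) : ℝ → ℂ)), μ.re < 0) :
    ∃ J R Q : Matrix (Fin n) (Fin n) ℝ,
      Jᵀ = -J ∧
      (Rᵀ = R ∧ ∀ v : Fin n → ℝ, v ≠ 0 → 0 < v ⬝ᵥ (R *ᵥ v)) ∧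
      (Qᵀ = Q ∧ ∀ v : Fin n → ℝ, v ≠ 0 → 0 < v ⬝ᵥ (Q *ᵥ v)) ∧
      A = (J - R) * Q := by
  obtain ⟨S, hS, hLyap⟩ := IsHurwitz.exists_posDef_mul_add_mul_transpose_eq_neg_one (A := A) hH
  have hAS : (2⁻¹ : ℝ) • (A * S - S * Aᵀ) - (2⁻¹ : ℝ) • 1 = A * S := by
    rw [← neg_neg (1 : Matrix (Fin n) (Fin n) ℝ), ← hLyap]
    module
  refine ⟨(2⁻¹ : ℝ) • (A * S - S * Aᵀ), (2⁻¹ : ℝ) • 1, S⁻¹, ?_,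
    posDef_iff_transpose_eq_and_dotProduct_mulVec_pos.1 (PosDef.one.smul (by norm_num)),
    posDef_iff_transpose_eq_and_dotProduct_mulVec_pos.1 hS.inv, ?_⟩
  · rw [transpose_smul, transpose_sub, transpose_mul, transpose_mul, transpose_transpose,
      (posDef_iff_transpose_eq_and_dotProduct_mulVec_pos.1 hS).1, ← smul_neg, neg_sub]
  · rw [hAS, mul_nonsing_inv_cancel_right _ _ ((isUnit_iff_isUnit_det _).1 hS.isUnit)]
end

section
/- Let n be a natural number and let J̄, R̄, Q̄ be arbitrary real n×n matrices. Then every eigenvalue μ of the matrix A = (J̄ − J̄ᵀ − R̄R̄ᵀ)·(Q̄Q̄ᵀ) (i.e., every μ in the spectrum over ℂ of the complexification of A) satisfies Re(μ) ≤ 0. In other words, the unconstrained parameterization A = (J̄ − J̄ᵀ − R̄R̄ᵀ)Q̄Q̄ᵀ always produces a matrix whose eigenvalues lie in the closed left half complex plane. -/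
/-!
If `B P v = μ v` with `v ≠ 0`, put `w = P v`. Since `P = Q Qᴴ` is Hermitian,
`wᴴ B w = μ · vᴴ P v`, where `vᴴ P v = ‖Qᴴ v‖² ≥ 0`; and `Re (wᴴ B w) = ½ wᴴ (B + Bᴴ) w ≤ 0`
because `B + Bᴴ = -2 R Rᴴ`. Hence `Re μ · vᴴ P v ≤ 0`. If `vᴴ P v = 0` then `P v = 0`,
so `μ v = B P v = 0` and `μ = 0`.
-/

open Matrix
open scoped ComplexOrder

namespace Matrix

section

variable {n 𝕜 : Type*} [Fintype n] [RCLike 𝕜]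

theorem star_dotProduct_conjTranspose_mulVec (B : Matrix n n 𝕜) (w : n → 𝕜) :
    star w ⬝ᵥ Bᴴ *ᵥ w = star (star w ⬝ᵥ B *ᵥ w) := by
  rw [star_dotProduct, star_mulVec, conjTranspose_conjTranspose, ← dotProduct_mulVec]

theorem re_star_dotProduct_mulVec_nonpos {B : Matrix n n 𝕜} (hB : (-(B + Bᴴ)).PosSemidef)
    (w : n → 𝕜) : RCLike.re (star w ⬝ᵥ B *ᵥ w) ≤ 0 := by
  have h := (RCLike.nonneg_iff.mp (hB.dotProduct_mulVec_nonneg w)).1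
  rw [neg_mulVec, add_mulVec, dotProduct_neg, dotProduct_add,
    star_dotProduct_conjTranspose_mulVec, map_neg, map_add, RCLike.star_def, RCLike.conj_re] at h
  linarith

theorem exists_mulVec_eq_smul_of_mem_spectrum [DecidableEq n] {A : Matrix n n 𝕜} {μ : 𝕜}
    (hμ : μ ∈ spectrum 𝕜 A) : ∃ v ≠ 0, A *ᵥ v = μ • v := by
  rw [← spectrum_toLin', ← Module.End.hasEigenvalue_iff_mem_spectrum] at hμ
  obtain ⟨v, hv⟩ := hμ.exists_hasEigenvector
  exact ⟨v, hv.2, by simpa using hv.apply_eq_smul⟩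

theorem re_le_zero_of_mem_spectrum_mul [DecidableEq n] {B P : Matrix n n 𝕜}
    (hB : (-(B + Bᴴ)).PosSemidef) (hP : P.PosSemidef) {μ : 𝕜} (hμ : μ ∈ spectrum 𝕜 (B * P)) :
    RCLike.re μ ≤ 0 := by
  obtain ⟨v, hv0, hv⟩ := exists_mulVec_eq_smul_of_mem_spectrum hμ
  have hBw : B *ᵥ (P *ᵥ v) = μ • v := by rw [mulVec_mulVec, hv]
  have hform : star (P *ᵥ v) ⬝ᵥ B *ᵥ (P *ᵥ v) = μ * (star v ⬝ᵥ P *ᵥ v) := by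
    rw [hBw, star_mulVec, hP.isHermitian.eq, dotProduct_smul, ← dotProduct_mulVec, smul_eq_mul]
  obtain ⟨hp_re, hp_im⟩ := RCLike.nonneg_iff.mp (hP.dotProduct_mulVec_nonneg v)
  rcases hp_re.eq_or_lt with hp | hp
  · have hPv : P *ᵥ v = 0 := by
      refine (hP.dotProduct_mulVec_zero_iff v).mp (RCLike.ext ?_ ?_) <;> simp [← hp, hp_im]
    rw [hPv, mulVec_zero, eq_comm, smul_eq_zero] at hBw
    simp [hBw.resolve_right hv0]
  · have hre := re_star_dotProduct_mulVec_nonpos hB (P *ᵥ v)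
    rw [hform, RCLike.mul_re, hp_im, mul_zero, sub_zero] at hre
    exact nonpos_of_mul_nonpos_left hre hp

theorem re_le_zero_of_mem_spectrum_sub_mul_mul_conjTranspose [DecidableEq n]
    (J R Q : Matrix n n 𝕜) {μ : 𝕜}
    (hμ : μ ∈ spectrum 𝕜 ((J - Jᴴ - R * Rᴴ) * (Q * Qᴴ))) : RCLike.re μ ≤ 0 := by
  have hsum : -((J - Jᴴ - R * Rᴴ) + (J - Jᴴ - R * Rᴴ)ᴴ) = R * Rᴴ + R * Rᴴ := by
    simp only [conjTranspose_sub, conjTranspose_mul, conjTranspose_conjTranspose]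
    abel
  refine re_le_zero_of_mem_spectrum_mul ?_ (posSemidef_self_mul_conjTranspose Q) hμ
  rw [hsum]
  exact (posSemidef_self_mul_conjTranspose R).add (posSemidef_self_mul_conjTranspose R)

end

theorem map_ofReal_transpose {m : Type*} (X : Matrix m m ℝ) :
    Xᵀ.map ((↑) : ℝ → ℂ) = (X.map ((↑) : ℝ → ℂ))ᴴ := by
  rw [← conjTranspose_eq_transpose_of_trivial]
  exact conjTranspose_map _ fun x => (Complex.conj_ofReal x).symm

theorem map_ofReal_mul {m : Type*} [Fintype m] (X Y : Matrix m m ℝ) :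
    (X * Y).map ((↑) : ℝ → ℂ) = X.map (↑) * Y.map (↑) :=
  Matrix.map_mul (f := Complex.ofRealHom)

end Matrix

/-- The unconstrained parameterization `A = (J̄ - J̄ᵀ - R̄ R̄ᵀ)(Q̄ Q̄ᵀ)` always yields
a matrix whose eigenvalues lie in the closed left half complex plane. -/
theorem unconstrained_parameterization_stable (n : ℕ)
    (Jb Rb Qb : Matrix (Fin n) (Fin n) ℝ) :
    ∀ μ ∈ spectrum ℂ (((Jb - Jbᵀ - Rb * Rbᵀ) * (Qb * Qbᵀ)).map ((↑) : ℝ → ℂ)),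
      μ.re ≤ 0 := by
  intro μ hμ
  simp only [map_ofReal_mul, Matrix.map_sub _ Complex.ofReal_sub, map_ofReal_transpose] at hμ
  exact re_le_zero_of_mem_spectrum_sub_mul_mul_conjTranspose _ _ _ hμ
end

section
/- Let n be a natural number, let J be a real n×n skew-symmetric matrix, R a real n×n positive semidefinite matrix, Q a real n×n positive definite matrix, and set A = (J − R)Q. If μ is an eigenvalue of the complexification of A and v ∈ ℂⁿ is a corresponding nonzero eigenvector, then Re(μ) · (v* Q v) = −(Qv)* R (Qv), where Q and R act on ℂⁿ via their complexifications and w* z denotes the complex inner product. In particular, since v* Q v > 0, Re(μ) = −(Qv)* R (Qv) / (v* Q v). -/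
/-!
Put `w = Q v`. Pairing `(J - R) w = μ v` with `w` gives `w* J w - w* R w = μ (v* Q v)`, because
`Q` is Hermitian. The complexification of the skew-symmetric `J` is skew-Hermitian, so `w* J w`
is purely imaginary, while `w* R w` and `v* Q v` are real; taking real parts gives the identity.
Finally `v* Q v` is the sum of the real quadratic forms of `Re v` and `Im v`, hence positive.
-/

open Matrix

namespace Matrix

variable {n : Type*}

theorem conjTranspose_map_ofReal {m : Type*} (M : Matrix m n ℝ) :
    (M.map ((↑) : ℝ → ℂ))ᴴ = Mᵀ.map (↑) := by
  rw [← conjTranspose_map _ fun r => (Complex.conj_ofReal r).symm,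
    conjTranspose_eq_transpose_of_trivial]

theorem isHermitian_map_ofReal {M : Matrix n n ℝ} (hM : Mᵀ = M) :
    (M.map ((↑) : ℝ → ℂ)).IsHermitian := by
  rw [IsHermitian, conjTranspose_map_ofReal, hM]

variable [Fintype n]

theorem star_star_dotProduct_mulVec_self {α : Type*} [CommSemiring α] [StarRing α]
    (K : Matrix n n α) (x : n → α) :
    star (star x ⬝ᵥ K *ᵥ x) = star x ⬝ᵥ Kᴴ *ᵥ x := by
  rw [← star_dotProduct, star_mulVec, dotProduct_mulVec]

section RCLike

variable {𝕜 : Type*} [RCLike 𝕜]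

theorem re_star_dotProduct_mulVec_self_of_conjTranspose_eq_neg {K : Matrix n n 𝕜}
    (hK : Kᴴ = -K) (x : n → 𝕜) : RCLike.re (star x ⬝ᵥ K *ᵥ x) = 0 := by
  have h := congrArg RCLike.re (star_star_dotProduct_mulVec_self K x)
  rw [hK, neg_mulVec, dotProduct_neg, map_neg, RCLike.star_def, RCLike.conj_re] at h
  linarith

theorem IsHermitian.coe_re_star_dotProduct_mulVec_self {H : Matrix n n 𝕜} (hH : H.IsHermitian)
    (x : n → 𝕜) : (RCLike.re (star x ⬝ᵥ H *ᵥ x) : 𝕜) = star x ⬝ᵥ H *ᵥ x := by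
  rw [← RCLike.conj_eq_iff_re, ← RCLike.star_def, star_star_dotProduct_mulVec_self, hH.eq]

theorem re_mul_star_dotProduct_mulVec_eq_neg {K H P : Matrix n n 𝕜} (hK : Kᴴ = -K)
    (hH : H.IsHermitian) (hP : P.IsHermitian) {μ : 𝕜} {v : n → 𝕜}
    (heig : (K - H) *ᵥ (P *ᵥ v) = μ • v) :
    (RCLike.re μ : 𝕜) * (star v ⬝ᵥ P *ᵥ v) = -(star (P *ᵥ v) ⬝ᵥ H *ᵥ (P *ᵥ v)) := by
  set w := P *ᵥ v
  have hwv : star w ⬝ᵥ v = star v ⬝ᵥ P *ᵥ v := by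
    rw [star_mulVec, hP.eq, ← dotProduct_mulVec]
  have hbalance : star w ⬝ᵥ K *ᵥ w - star w ⬝ᵥ H *ᵥ w = μ * (star v ⬝ᵥ P *ᵥ v) := by
    rw [← dotProduct_sub, ← sub_mulVec, heig, dotProduct_smul, smul_eq_mul, hwv]
  rw [← hP.coe_re_star_dotProduct_mulVec_self, ← hH.coe_re_star_dotProduct_mulVec_self,
    ← RCLike.ofReal_mul, ← RCLike.ofReal_neg, RCLike.ofReal_inj]
  have := congrArg RCLike.re hbalance
  rw [map_sub, re_star_dotProduct_mulVec_self_of_conjTranspose_eq_neg hK,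
    ← hP.coe_re_star_dotProduct_mulVec_self, RCLike.re_mul_ofReal] at this
  linarith

end RCLike

theorem star_dotProduct_map_ofReal_mulVec_self {M : Matrix n n ℝ} (hM : Mᵀ = M) (x : n → ℂ) :
    star x ⬝ᵥ M.map (↑) *ᵥ x =
      ↑((fun i => (x i).re) ⬝ᵥ M *ᵥ (fun i => (x i).re) +
        (fun i => (x i).im) ⬝ᵥ M *ᵥ (fun i => (x i).im)) := by
  rw [← (isHermitian_map_ofReal hM).coe_re_star_dotProduct_mulVec_self, RCLike.re_to_complex]
  refine congrArg Complex.ofReal ?_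
  simp only [dotProduct, mulVec, Pi.star_apply, map_apply, Finset.mul_sum, Complex.re_sum]
  rw [← Finset.sum_add_distrib]
  refine Finset.sum_congr rfl fun i _ => ?_
  rw [← Finset.sum_add_distrib]
  refine Finset.sum_congr rfl fun j _ => ?_
  simp only [Complex.star_def, Complex.mul_re, Complex.conj_re, Complex.conj_im,
    Complex.im_ofReal_mul, Complex.ofReal_re, Complex.ofReal_im]
  ring

theorem re_star_dotProduct_map_ofReal_mulVec_self_pos {M : Matrix n n ℝ} (hM : Mᵀ = M)
    (hpos : ∀ v : n → ℝ, v ≠ 0 → 0 < v ⬝ᵥ M *ᵥ v) {x : n → ℂ} (hx : x ≠ 0) :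
    0 < (star x ⬝ᵥ M.map (↑) *ᵥ x).re := by
  have hnonneg (v : n → ℝ) : 0 ≤ v ⬝ᵥ M *ᵥ v := by
    rcases eq_or_ne v 0 with rfl | hv
    · simp
    · exact (hpos v hv).le
  rw [star_dotProduct_map_ofReal_mulVec_self hM, Complex.ofReal_re]
  by_cases hre : (fun i => (x i).re) = 0
  · have him : (fun i => (x i).im) ≠ 0 := fun him =>
      hx (funext fun i => Complex.ext (congrFun hre i) (congrFun him i))
    exact add_pos_of_nonneg_of_pos (hnonneg _) (hpos _ him)
  · exact add_pos_of_pos_of_nonneg (hpos _ hre) (hnonneg _)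

end Matrix

theorem eigenvalue_re_formula_general (n : ℕ) (J R Q A : Matrix (Fin n) (Fin n) ℝ)
    (hJ : Jᵀ = -J)
    (hRsym : Rᵀ = R)
    (hQsym : Qᵀ = Q) (hQpd : ∀ v : Fin n → ℝ, v ≠ 0 → 0 < v ⬝ᵥ (Q *ᵥ v))
    (hA : A = (J - R) * Q)
    (μ : ℂ) (v : Fin n → ℂ) (hv : v ≠ 0)
    (heig : (A.map ((↑) : ℝ → ℂ)) *ᵥ v = μ • v) :
    (μ.re : ℂ) * (star v ⬝ᵥ ((Q.map ((↑) : ℝ → ℂ)) *ᵥ v)) =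
      -(star ((Q.map ((↑) : ℝ → ℂ)) *ᵥ v) ⬝ᵥ
        ((R.map ((↑) : ℝ → ℂ)) *ᵥ ((Q.map ((↑) : ℝ → ℂ)) *ᵥ v))) ∧
    (μ.re : ℂ) =
      -(star ((Q.map ((↑) : ℝ → ℂ)) *ᵥ v) ⬝ᵥ
        ((R.map ((↑) : ℝ → ℂ)) *ᵥ ((Q.map ((↑) : ℝ → ℂ)) *ᵥ v))) /
      (star v ⬝ᵥ ((Q.map ((↑) : ℝ → ℂ)) *ᵥ v)) := by
  have hfactor : (J.map (↑) - R.map (↑)) *ᵥ (Q.map ((↑) : ℝ → ℂ) *ᵥ v) = μ • v := by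
    have hAc : A.map ((↑) : ℝ → ℂ) = (J.map (↑) - R.map (↑)) * Q.map (↑) := hA ▸
      (Matrix.map_mul (f := Complex.ofRealHom)).trans
        (by rw [Matrix.map_sub _ (map_sub Complex.ofRealHom)]; rfl)
    rw [mulVec_mulVec, ← hAc, heig]
  have hskew : (J.map ((↑) : ℝ → ℂ))ᴴ = -J.map (↑) := by
    rw [conjTranspose_map_ofReal, hJ, Matrix.map_neg _ Complex.ofReal_neg]
  have hbalance := re_mul_star_dotProduct_mulVec_eq_neg hskew (isHermitian_map_ofReal hRsym)
    (isHermitian_map_ofReal hQsym) hfactor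
  have hQv : star v ⬝ᵥ Q.map ((↑) : ℝ → ℂ) *ᵥ v ≠ 0 := fun h =>
    (re_star_dotProduct_map_ofReal_mulVec_self_pos hQsym hQpd hv).ne' (by rw [h, Complex.zero_re])
  exact ⟨hbalance, eq_div_of_mul_eq hQv hbalance⟩

/-- For `A = (J - R) Q` with `J` skew-symmetric, `R` positive semidefinite and
`Q` positive definite, if `v ≠ 0` is an eigenvector of the complexification of `A`
with eigenvalue `μ`, then `Re(μ) · (v* Q v) = -(Qv)* R (Qv)`; in particular
`Re(μ) = -(Qv)* R (Qv) / (v* Q v)`. -/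
theorem eigenvalue_re_formula (n : ℕ) (J R Q A : Matrix (Fin n) (Fin n) ℝ)
    (hJ : Jᵀ = -J)
    (hRsym : Rᵀ = R) (hRpsd : ∀ v : Fin n → ℝ, 0 ≤ v ⬝ᵥ (R *ᵥ v))
    (hQsym : Qᵀ = Q) (hQpd : ∀ v : Fin n → ℝ, v ≠ 0 → 0 < v ⬝ᵥ (Q *ᵥ v))
    (hA : A = (J - R) * Q)
    (μ : ℂ) (v : Fin n → ℂ) (hv : v ≠ 0)
    (heig : (A.map ((↑) : ℝ → ℂ)) *ᵥ v = μ • v) :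
    (μ.re : ℂ) * (star v ⬝ᵥ ((Q.map ((↑) : ℝ → ℂ)) *ᵥ v)) =
      -(star ((Q.map ((↑) : ℝ → ℂ)) *ᵥ v) ⬝ᵥ
        ((R.map ((↑) : ℝ → ℂ)) *ᵥ ((Q.map ((↑) : ℝ → ℂ)) *ᵥ v))) ∧
    (μ.re : ℂ) =
      -(star ((Q.map ((↑) : ℝ → ℂ)) *ᵥ v) ⬝ᵥ
        ((R.map ((↑) : ℝ → ℂ)) *ᵥ ((Q.map ((↑) : ℝ → ℂ)) *ᵥ v))) /
      (star v ⬝ᵥ ((Q.map ((↑) : ℝ → ℂ)) *ᵥ v)) :=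
  eigenvalue_re_formula_general n J R Q A hJ hRsym hQsym hQpd hA μ v hv heig
end
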